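/- arXiv:2604.17777 — 2 statements merged into one kernel-verified Lean document; each statement's English description precedes it below -/
import Mathlib

section
/- Let n ≥ 3 and 0 ≤ k ≤ n - 2. Then a_n^{-k} E_{2,1} a_n^{k} = E_{k+2, k+1}, and hence a_n^{-k} b_n a_n^{k} = I_n + E_{k+2,k+1} = T_{k+2,k+1}. -/
open Matrix

/-- The `n × n` integer matrix unit `E_{i,j}`, with 1-based indices `i, j ∈ {1, …, n}`:
its `(r,s)` entry (0-based) is `1` when `r + 1 = i` and `s + 1 = j`, and `0` otherwise. -/
def matUnit (n i j : ℕ) : Matrix (Fin n) (Fin n) ℤ :=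
  Matrix.of fun r s => if r.val + 1 = i ∧ s.val + 1 = j then 1 else 0

/-- The elementary transvection `T_{i,j} = I_n + E_{i,j}` (1-based indices). -/
def Tmat (n i j : ℕ) : Matrix (Fin n) (Fin n) ℤ :=
  1 + matUnit n i j

/-- The sign `ε_n = (-1)^(n-1)`. -/
def eps (n : ℕ) : ℤ := (-1) ^ (n - 1)

/-- `a_n = Σ_{i=1}^{n-1} E_{i,i+1} + ε_n E_{n,1}`. -/
def aMat (n : ℕ) : Matrix (Fin n) (Fin n) ℤ :=
  (∑ i ∈ Finset.range (n - 1), matUnit n (i + 1) (i + 2)) + eps n • matUnit n n 1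

/-- `b_n = I_n + E_{2,1}`. -/
def bMat (n : ℕ) : Matrix (Fin n) (Fin n) ℤ :=
  1 + matUnit n 2 1


/-! Right multiplication by `a_n` moves the column index of a matrix unit one step to the right,
`E_{i,j} a_n = E_{i,j+1}` for `j < n`, and left multiplication moves the row index one step up,
`a_n E_{i+1,j} = E_{i,j}` for `i ≥ 1`. Together these give `E_{2,1} a_n^k = a_n^k E_{k+2,k+1}`
as long as `k + 2 ≤ n`. Since `a_n` is a signed permutation matrix, `a_nᵀ a_n = 1`, so `a_n` is
invertible and the intertwining relation is the claimed conjugation; `b_n = 1 + E_{2,1}` follows. -/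

theorem Matrix.inv_pow_mul_mul_pow_eq {ι R : Type*} [Fintype ι] [DecidableEq ι] [CommRing R]
    {P A B : Matrix ι ι R} (hP : IsUnit P.det) {k : ℕ} (h : A * P ^ k = P ^ k * B) :
    P⁻¹ ^ k * A * P ^ k = B := by
  rw [mul_assoc, h, ← mul_assoc, inv_pow', nonsing_inv_mul _ (by rw [det_pow]; exact hP.pow k),
    one_mul]

lemma eps_mul_self (n : ℕ) : eps n * eps n = 1 := by
  rw [eps, ← mul_pow]; norm_num

section

variable {n : ℕ}

lemma aMat_apply (r s : Fin n) :
    aMat n r s = if s.val = r.val + 1 then 1 else if r.val + 1 = n ∧ s.val = 0 then eps n else 0 := by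
  simp only [aMat, matUnit, Matrix.add_apply, Matrix.smul_apply, Matrix.sum_apply, of_apply,
    smul_eq_mul]
  rw [Finset.sum_eq_single r.val]
  · split_ifs <;> omega
  · intro i _ hi; rw [if_neg (by omega)]
  · intro h; rw [Finset.mem_range] at h; rw [if_neg (by omega)]

lemma matUnit_mul_apply (M : Matrix (Fin n) (Fin n) ℤ) (i : ℕ) (j r s : Fin n) :
    (matUnit n i (j.val + 1) * M) r s = if r.val + 1 = i then M j s else 0 := by
  rw [Matrix.mul_apply, Finset.sum_eq_single j]
  · simp [matUnit]
  · intro t _ ht; simp [matUnit, Fin.val_inj, ht]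
  · simp

lemma mul_matUnit_apply (M : Matrix (Fin n) (Fin n) ℤ) (i r s : Fin n) (j : ℕ) :
    (M * matUnit n (i.val + 1) j) r s = if s.val + 1 = j then M r i else 0 := by
  rw [Matrix.mul_apply, Finset.sum_eq_single i]
  · simp [matUnit]
  · intro t _ ht; simp [matUnit, Fin.val_inj, ht]
  · simp

lemma matUnit_mul_aMat {i j : ℕ} (hj : j + 1 < n) :
    matUnit n i (j + 1) * aMat n = matUnit n i (j + 2) := by
  ext r s
  rw [matUnit_mul_apply (j := ⟨j, by omega⟩), aMat_apply]
  simp only [matUnit, of_apply]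
  split_ifs <;> omega

lemma aMat_mul_matUnit {i j : ℕ} (hi : i + 1 < n) :
    aMat n * matUnit n (i + 2) j = matUnit n (i + 1) j := by
  ext r s
  rw [mul_matUnit_apply (i := ⟨i + 1, hi⟩), aMat_apply]
  simp only [matUnit, of_apply, Nat.add_one_ne_zero, and_false, if_false]
  split_ifs <;> omega

lemma matUnit_two_one_mul_aMat_pow {k : ℕ} (hk : k ≤ n - 2) :
    matUnit n 2 1 * aMat n ^ k = aMat n ^ k * matUnit n (k + 2) (k + 1) := by
  induction k with
  | zero => simp
  | succ k ih =>
    calc matUnit n 2 1 * aMat n ^ (k + 1)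
        = aMat n ^ k * (matUnit n (k + 2) (k + 1) * aMat n) := by
          rw [pow_succ, ← mul_assoc, ih (by omega), mul_assoc]
      _ = aMat n ^ k * (aMat n * matUnit n (k + 3) (k + 2)) := by
          rw [matUnit_mul_aMat (by omega), aMat_mul_matUnit (by omega)]
      _ = aMat n ^ (k + 1) * matUnit n (k + 1 + 2) (k + 1 + 1) := by
          rw [← mul_assoc, ← pow_succ]

lemma aMat_transpose_mul_self : (aMat n)ᵀ * aMat n = 1 := by
  ext r s
  have hn : 0 < n := r.pos
  -- the only nonzero entry of column `r` lies in row `t = r - 1 (mod n)`, and it is `1` or `ε_n`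
  obtain ⟨t, ht⟩ : ∃ t : Fin n, t.val + 1 = if r.val = 0 then n else r.val :=
    ⟨⟨(if r.val = 0 then n else r.val) - 1, by split_ifs <;> omega⟩,
      Nat.sub_add_cancel (by split_ifs <;> omega)⟩
  rw [Matrix.mul_apply, Finset.sum_eq_single t]
  · simp only [transpose_apply, aMat_apply, Matrix.one_apply, Fin.ext_iff]
    split_ifs at ht ⊢ <;> first | omega | simp [eps_mul_self]
  · intro u _ hu
    simp only [transpose_apply, aMat_apply]
    split_ifs at ht ⊢ <;> omega
  · simp

end

theorem aMat_conj_basic_transvection_general (n : ℕ) (k : ℕ) (hk : k ≤ n - 2) :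
    ((aMat n)⁻¹) ^ k * matUnit n 2 1 * (aMat n) ^ k = matUnit n (k + 2) (k + 1) ∧
    ((aMat n)⁻¹) ^ k * bMat n * (aMat n) ^ k = 1 + matUnit n (k + 2) (k + 1) ∧
    ((aMat n)⁻¹) ^ k * bMat n * (aMat n) ^ k = Tmat n (k + 2) (k + 1) := by
  have hdet : IsUnit (aMat n).det := isUnit_det_of_left_inverse aMat_transpose_mul_self
  have hE := matUnit_two_one_mul_aMat_pow hk
  have hb : bMat n * aMat n ^ k = aMat n ^ k * (1 + matUnit n (k + 2) (k + 1)) := by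
    rw [bMat, add_mul, mul_add, one_mul, mul_one, hE]
  have hconj := inv_pow_mul_mul_pow_eq hdet hb
  exact ⟨inv_pow_mul_mul_pow_eq hdet hE, hconj, hconj⟩

/-- For `n ≥ 3` and `0 ≤ k ≤ n - 2`, one has
`a_n^{-k} E_{2,1} a_n^{k} = E_{k+2, k+1}`, and hence
`a_n^{-k} b_n a_n^{k} = I_n + E_{k+2,k+1} = T_{k+2,k+1}`. -/
theorem aMat_conj_basic_transvection (n : ℕ) (hn : 3 ≤ n) (k : ℕ) (hk : k ≤ n - 2) :
    ((aMat n)⁻¹) ^ k * matUnit n 2 1 * (aMat n) ^ k = matUnit n (k + 2) (k + 1) ∧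
    ((aMat n)⁻¹) ^ k * bMat n * (aMat n) ^ k = 1 + matUnit n (k + 2) (k + 1) ∧
    ((aMat n)⁻¹) ^ k * bMat n * (aMat n) ^ k = Tmat n (k + 2) (k + 1) :=
  aMat_conj_basic_transvection_general n k hk
end

section
/- For every n ≥ 3, the pair (a_n, b_n) generates SL_n(ℤ): the subgroup of SL_n(ℤ) generated by {a_n, b_n} is the whole group. In particular, every elementary transvection T_{i,j} (i ≠ j) lies in the subgroup generated by a_n and b_n. -/
open Matrix

/-!
Conjugation by `a_n`, a signed cyclic permutation matrix, turns the transvection `T_{i,j}(c)` into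
`T_{i+1,j+1}(±c)` (indices mod `n`), so from `b_n = T_{2,1}` the subgroup `⟨a_n, b_n⟩` contains
every `T_{j+1,j}(c)`; the commutator identity `[T_{i,p}(c), T_{p,j}(1)] = T_{i,j}(c)` then yields
every transvection.

Transvections generate `SL_n(ℤ)` by column-by-column elimination. Once the first `k` columns of
`M` are those of the identity, row operations whose source row is at least `k` keep them so; the
Euclidean algorithm on column `k` leaves a single nonzero entry, which is a unit because `M` is
invertible, and that unit is moved to the diagonal as `1`. Making a diagonal `-1` positive needs a
further row; in the last column there is none, but there the determinant forces the entry to be `1`.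
-/

namespace Matrix

variable {ι R : Type*} [Fintype ι] [DecidableEq ι] [CommRing R]

theorem transvection_mul_apply (i j : ι) (c : R) (M : Matrix ι ι R) (a b : ι) :
    (transvection i j c * M) a b = M a b + if a = i then c * M j b else 0 := by
  by_cases ha : a = i
  · subst ha; simp [transvection_mul_apply_same]
  · simp [transvection_mul_apply_of_ne _ _ _ _ ha, ha]

theorem sum_natAbs_transvection_mul_apply_lt {r s K : ι} {M : Matrix ι ι ℤ} (hs0 : M s K ≠ 0)
    (hle : (M s K).natAbs ≤ (M r K).natAbs) :
    ∑ t, ((transvection r s (-(M r K / M s K)) * M) t K).natAbs < ∑ t, (M t K).natAbs := by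
  have hN (t : ι) : (transvection r s (-(M r K / M s K)) * M) t K
      = if t = r then M r K % M s K else M t K := by
    rw [transvection_mul_apply, Int.emod_def]
    split_ifs with ht
    · subst ht; ring
    · rw [add_zero]
  have hlt : (M r K % M s K).natAbs < (M r K).natAbs := by
    have := Int.emod_nonneg (M r K) hs0
    have := Int.emod_lt (M r K) hs0
    omega
  refine Finset.sum_lt_sum (fun t _ => ?_) ⟨r, Finset.mem_univ r, ?_⟩
  · rw [hN t]
    split_ifs with ht
    · rw [ht]; exact hlt.le
    · exact le_rfl
  · rw [hN r, if_pos rfl]; exact hlt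

namespace SpecialLinearGroup

theorem coe_transvection {i j : ι} (h : i ≠ j) (c : R) :
    (transvection h c : Matrix ι ι R) = Matrix.transvection i j c :=
  rfl

theorem transvection_one_zpow {i j : ι} (h : i ≠ j) (c : ℤ) :
    transvection h (1 : ℤ) ^ c = transvection h c := by
  induction c using Int.induction_on with
  | zero => simp
  | succ m hm => rw [_root_.zpow_add_one, hm, ← transvection_add]
  | pred m hm => rw [_root_.zpow_sub_one, hm, transvection_inv, ← transvection_add]; rfl

open commutatorElement in
theorem commutator_transvection {i p j : ι} (hip : i ≠ p) (hpj : p ≠ j) (hij : i ≠ j)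
    (c d : R) :
    ⁅transvection hip c, transvection hpj d⁆ = transvection hij (c * d) := by
  ext : 1
  simp [commutatorElement_def, transvection_inv, transvection_coe, mul_add, add_mul,
    single_mul_single_of_ne _ _ _ _ hij.symm, single_mul_single_of_ne _ _ _ _ hpj.symm,
    single_mul_single_of_ne _ _ _ _ hip.symm, ← single_neg]
  abel

end SpecialLinearGroup

end Matrix

section Transvections

variable {ι R : Type*} [Fintype ι] [DecidableEq ι] [CommRing R]

-- Vacuous for `i = j`, which makes the relation transitive with no side conditions.
def ContainsTransvections (G : Subgroup (Matrix.SpecialLinearGroup ι R)) (i j : ι) : Prop :=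
  ∀ (h : i ≠ j) (c : R), SpecialLinearGroup.transvection h c ∈ G

variable {G : Subgroup (Matrix.SpecialLinearGroup ι R)}

open commutatorElement in
theorem ContainsTransvections.trans {i p j : ι} (hip : ContainsTransvections G i p)
    (hpj : ContainsTransvections G p j) : ContainsTransvections G i j := by
  intro hij c
  obtain rfl | hip' := eq_or_ne i p
  · exact hpj hij c
  obtain rfl | hpj' := eq_or_ne p j
  · exact hip hij c
  rw [← mul_one c, ← SpecialLinearGroup.commutator_transvection hip' hpj' hij,
    commutatorElement_def]
  exact mul_mem (mul_mem (mul_mem (hip hip' c) (hpj hpj' 1)) (inv_mem (hip hip' c)))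
    (inv_mem (hpj hpj' 1))

theorem transvection_mem_of_one_mem {G : Subgroup (Matrix.SpecialLinearGroup ι ℤ)} {i j : ι}
    (h : i ≠ j) (h1 : SpecialLinearGroup.transvection h (1 : ℤ) ∈ G) (c : ℤ) :
    SpecialLinearGroup.transvection h c ∈ G :=
  SpecialLinearGroup.transvection_one_zpow h c ▸ zpow_mem h1 c

end Transvections

section Elimination

variable {n : ℕ} {R : Type*} [CommRing R]

def FirstColsEqOne (k : ℕ) (M : Matrix (Fin n) (Fin n) R) : Prop :=
  ∀ i j : Fin n, j.val < k → M i j = (1 : Matrix (Fin n) (Fin n) R) i j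

theorem FirstColsEqOne.transvection_mul {k : ℕ} {M : Matrix (Fin n) (Fin n) R}
    (hM : FirstColsEqOne k M) (r : Fin n) {s : Fin n} (hs : k ≤ s.val) (c : R) :
    FirstColsEqOne k (transvection r s c * M) := by
  intro i j hj
  have hsj : s ≠ j := fun e => by subst e; omega
  simp [transvection_mul_apply, hM _ _ hj, one_apply, hsj]

theorem FirstColsEqOne.succ {K : Fin n} {M : Matrix (Fin n) (Fin n) R} (hM : FirstColsEqOne K M)
    (hcol : ∀ r, M r K = (Pi.single K 1 : Fin n → R) r) : FirstColsEqOne (K + 1) M := by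
  intro i j hj
  obtain hj | rfl : j.val < K ∨ j = K := by rw [Fin.ext_iff]; omega
  · exact hM i j hj
  · simp [hcol, one_apply, Pi.single_apply]

theorem FirstColsEqOne.det_eq {K : Fin n} (hK : K.val + 1 = n) {M : Matrix (Fin n) (Fin n) R}
    (hM : FirstColsEqOne K M) : M.det = M K K := by
  have hlt : ∀ {i : Fin n}, i ≠ K → i.val < K := fun {i} hi => by
    have := i.isLt; have : i.val ≠ K.val := Fin.val_ne_of_ne hi; omega
  have hupper : M.IsUpperTriangular := fun i j (hji : j < i) => by
    have hj : j.val < K := by have := i.isLt; rw [Fin.lt_def] at hji; omega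
    rw [hM i j hj, one_apply_ne (ne_of_gt hji)]
  rw [det_of_isUpperTriangular hupper]
  exact Finset.prod_eq_single K (fun i _ hi => by rw [hM i i (hlt hi), one_apply_eq]) (by simp)

theorem FirstColsEqOne.isUnit_apply {K p : Fin n} {M : Matrix.SpecialLinearGroup (Fin n) R}
    (hM : FirstColsEqOne K (M : Matrix (Fin n) (Fin n) R))
    (h0 : ∀ t, K ≤ t → t ≠ p → M t K = 0) : IsUnit (M p K) := by
  have hMM : ((M⁻¹ : Matrix.SpecialLinearGroup (Fin n) R) : Matrix (Fin n) (Fin n) R) * M = 1 :=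
    congrArg Subtype.val (inv_mul_cancel M)
  have hinv : ∀ t < K, M⁻¹ K t = 0 := by
    intro t ht
    have hKt := congrFun₂ hMM K t
    rw [one_apply_ne (Fin.ne_of_gt ht), mul_apply] at hKt
    rwa [Finset.sum_eq_single t (fun u _ hu => by rw [hM u t ht, one_apply_ne hu, mul_zero])
      (by simp), hM t t ht, one_apply_eq, mul_one] at hKt
  have hKK := congrFun₂ hMM K K
  rw [one_apply_eq, mul_apply, Finset.sum_eq_single p (fun t _ htp => ?_) (by simp)] at hKK
  · exact IsUnit.of_mul_eq_one_right _ hKK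
  · rcases lt_or_ge t K with htK | htK
    · rw [hinv t htK, zero_mul]
    · rw [h0 t htK htp, mul_zero]

theorem FirstColsEqOne.exists_col_eq_single {K : Fin n} {M : Matrix.SpecialLinearGroup (Fin n) ℤ}
    (hM : FirstColsEqOne K (M : Matrix (Fin n) (Fin n) ℤ))
    (hred : ∀ r s, r ≠ s → K ≤ s → M s K ≠ 0 → (M r K).natAbs < (M s K).natAbs) :
    ∃ p, K ≤ p ∧ IsUnit (M p K) ∧ ∀ r, M r K = (Pi.single p (M p K) : Fin n → ℤ) r := by
  obtain ⟨p, hp, hp0⟩ : ∃ p, K ≤ p ∧ M p K ≠ 0 := by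
    by_contra! hzero
    simpa [hzero K le_rfl] using hM.isUnit_apply (p := K) fun t ht _ => hzero t ht
  have hu := hM.isUnit_apply fun t ht htp => by
    by_contra h0
    have := hred t p htp hp hp0; have := hred p t (Ne.symm htp) ht h0
    omega
  refine ⟨p, hp, hu, fun r => ?_⟩
  obtain rfl | hrp := eq_or_ne r p
  · rw [Pi.single_eq_same]
  · have := hred r p hrp hp hp0
    rw [Pi.single_eq_of_ne hrp, Int.natAbs_of_isUnit hu] at *
    omega

theorem transvection_mul_transvection_mul_apply_of_col_eq_single {K p q : Fin n} (hpq : p ≠ q)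
    {u : R} (hu : u * u = 1) {M : Matrix (Fin n) (Fin n) R}
    (hcol : ∀ r, M r K = (Pi.single p u : Fin n → R) r) (r : Fin n) :
    (transvection p q (-u) * (transvection q p u * M)) r K = (Pi.single q 1 : Fin n → R) r := by
  simp only [transvection_mul_apply, hcol, Pi.single_apply, if_neg hpq.symm]
  split_ifs <;> simp_all

variable {G : Subgroup (Matrix.SpecialLinearGroup (Fin n) ℤ)}

theorem FirstColsEqOne.mem_of_col_eq_single_of_ne (hG : ∀ i j, ContainsTransvections G i j)
    {K p q : Fin n} (hp : K ≤ p) (hq : K ≤ q) (hpq : p ≠ q) {u : ℤ} (hu : u * u = 1)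
    {M : Matrix.SpecialLinearGroup (Fin n) ℤ}
    (hM : FirstColsEqOne K (M : Matrix (Fin n) (Fin n) ℤ))
    (hcol : ∀ r, M r K = (Pi.single p u : Fin n → ℤ) r)
    (hq_mem : ∀ N : Matrix.SpecialLinearGroup (Fin n) ℤ,
      FirstColsEqOne K (N : Matrix (Fin n) (Fin n) ℤ) →
      (∀ r, N r K = (Pi.single q 1 : Fin n → ℤ) r) → N ∈ G) :
    M ∈ G := by
  refine (mul_mem_cancel_left (hG q p hpq.symm u)).mp <|
    (mul_mem_cancel_left (hG p q hpq (-u))).mp (hq_mem _ ?_ fun r => ?_)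
  · rw [Matrix.SpecialLinearGroup.coe_mul, Matrix.SpecialLinearGroup.coe_mul]
    exact (hM.transvection_mul q hp u).transvection_mul p hq (-u)
  · rw [Matrix.SpecialLinearGroup.coe_mul, Matrix.SpecialLinearGroup.coe_mul]
    exact transvection_mul_transvection_mul_apply_of_col_eq_single hpq hu hcol r

theorem FirstColsEqOne.mem_of_col_eq_single (hG : ∀ i j, ContainsTransvections G i j)
    {K p : Fin n} (hp : K ≤ p) {u : ℤ} (hu : IsUnit u)
    (ih : ∀ N : Matrix.SpecialLinearGroup (Fin n) ℤ,
      FirstColsEqOne (K + 1) (N : Matrix (Fin n) (Fin n) ℤ) → N ∈ G)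
    {M : Matrix.SpecialLinearGroup (Fin n) ℤ}
    (hM : FirstColsEqOne K (M : Matrix (Fin n) (Fin n) ℤ))
    (hcol : ∀ r, M r K = (Pi.single p u : Fin n → ℤ) r) :
    M ∈ G := by
  have hK : ∀ N : Matrix.SpecialLinearGroup (Fin n) ℤ,
      FirstColsEqOne K (N : Matrix (Fin n) (Fin n) ℤ) →
      (∀ r, N r K = (Pi.single K 1 : Fin n → ℤ) r) → N ∈ G :=
    fun N hN hcolN => ih N (hN.succ hcolN)
  obtain hpK | rfl := ne_or_eq p K
  · exact hM.mem_of_col_eq_single_of_ne hG hp le_rfl hpK (Int.isUnit_mul_self hu) hcol hK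
  obtain rfl | rfl := Int.isUnit_iff.mp hu
  · exact hK M hM hcol
  by_cases hlast : p.val + 1 = n
  · have hdet := hM.det_eq hlast
    rw [M.prop, hcol, Pi.single_eq_same] at hdet
    exact absurd hdet (by decide)
  set q : Fin n := ⟨p + 1, by omega⟩
  have hpq : p ≠ q := fun e => by simp [q, Fin.ext_iff] at e
  have hpq' : p ≤ q := Fin.le_def.mpr (by simp [q])
  exact hM.mem_of_col_eq_single_of_ne hG le_rfl hpq' hpq (by rfl) hcol fun N hN hcolN =>
    hN.mem_of_col_eq_single_of_ne hG hpq' le_rfl hpq.symm (by rfl) hcolN hK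

theorem FirstColsEqOne.mem_of_forall_succ (hG : ∀ i j, ContainsTransvections G i j) {K : Fin n}
    (ih : ∀ N : Matrix.SpecialLinearGroup (Fin n) ℤ,
      FirstColsEqOne (K + 1) (N : Matrix (Fin n) (Fin n) ℤ) → N ∈ G)
    (M : Matrix.SpecialLinearGroup (Fin n) ℤ)
    (hM : FirstColsEqOne K (M : Matrix (Fin n) (Fin n) ℤ)) :
    M ∈ G := by
  induction hμ : ∑ t, (M t K).natAbs using Nat.strong_induction_on generalizing M with
  | _ μ ihμ =>
  by_cases hred : ∃ r s, r ≠ s ∧ K ≤ s ∧ M s K ≠ 0 ∧ (M s K).natAbs ≤ (M r K).natAbs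
  · obtain ⟨r, s, hrs, hs, hs0, hle⟩ := hred
    refine (mul_mem_cancel_left (hG r s hrs (-(M r K / M s K)))).mp (ihμ _ ?_ _ ?_ rfl)
    · rw [← hμ, Matrix.SpecialLinearGroup.coe_mul, SpecialLinearGroup.coe_transvection]
      exact sum_natAbs_transvection_mul_apply_lt hs0 hle
    · rw [Matrix.SpecialLinearGroup.coe_mul]
      exact hM.transvection_mul r hs _
  push Not at hred
  obtain ⟨p, hp, hu, hcol⟩ := hM.exists_col_eq_single hred
  exact hM.mem_of_col_eq_single hG hp hu ih hcol

theorem eq_top_of_containsTransvections (hG : ∀ i j, ContainsTransvections G i j) : G = ⊤ := by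
  suffices h : ∀ k ≤ n, ∀ M : Matrix.SpecialLinearGroup (Fin n) ℤ,
      FirstColsEqOne k (M : Matrix (Fin n) (Fin n) ℤ) → M ∈ G from
    G.eq_top_iff'.mpr fun M => h 0 (Nat.zero_le n) M fun _ j hj => absurd hj j.val.not_lt_zero
  intro k hk
  induction hk using Nat.decreasingInduction with
  | self =>
    intro M hM
    convert G.one_mem
    ext i j
    exact hM i j j.isLt
  | of_succ k hk ih => exact FirstColsEqOne.mem_of_forall_succ (K := ⟨k, hk⟩) hG ih

end Elimination

section Monomial

variable {ι R : Type*} [Fintype ι] [DecidableEq ι] [CommRing R]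

def monomialMatrix (σ : Equiv.Perm ι) (w : ι → R) : Matrix ι ι R :=
  Matrix.of fun r s => if s = σ r then w r else 0

theorem monomialMatrix_mul_single (σ : Equiv.Perm ι) (w : ι → R) (i j : ι) (c : R) :
    monomialMatrix σ w * single (σ i) j c = single i j (w i * c) := by
  ext r s
  rw [mul_apply, Finset.sum_eq_single (σ i) (fun t _ ht => by simp [ht.symm]) (by simp)]
  by_cases hr : i = r <;> simp [monomialMatrix, single_apply, hr, Ne.symm]

theorem single_mul_monomialMatrix (σ : Equiv.Perm ι) (w : ι → R) (i j : ι) (c : R) :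
    single i j c * monomialMatrix σ w = single i (σ j) (c * w j) := by
  ext r s
  rw [mul_apply, Finset.sum_eq_single j (fun t _ ht => by simp [ht.symm]) (by simp)]
  by_cases hs : s = σ j <;> simp [monomialMatrix, single_apply, hs, eq_comm]

theorem monomialMatrix_mul_transvection (σ : Equiv.Perm ι) {w : ι → R} {j : ι}
    (hw : w j * w j = 1) (i : ι) (c : R) :
    monomialMatrix σ w * transvection (σ i) (σ j) c
      = transvection i j (w i * w j * c) * monomialMatrix σ w := by
  rw [transvection, transvection, mul_add, add_mul, monomialMatrix_mul_single,
    single_mul_monomialMatrix, mul_one, one_mul]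
  congr 2
  linear_combination (-(w i * c)) * hw

theorem ContainsTransvections.map_monomialMatrix {G : Subgroup (Matrix.SpecialLinearGroup ι R)}
    {A : Matrix.SpecialLinearGroup ι R} (hA : A ∈ G) {σ : Equiv.Perm ι} {w : ι → R}
    (hAσ : (A : Matrix ι ι R) = monomialMatrix σ w) (hw : ∀ r, w r * w r = 1) {i j : ι}
    (hij : ContainsTransvections G i j) : ContainsTransvections G (σ i) (σ j) := by
  intro h c
  have hij' : i ≠ j := fun e => h (congrArg σ e)
  have hconj : A * SpecialLinearGroup.transvection h c
      = SpecialLinearGroup.transvection hij' (w i * w j * c) * A := by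
    ext r s
    rw [Matrix.SpecialLinearGroup.coe_mul, Matrix.SpecialLinearGroup.coe_mul, hAσ]
    exact congrFun₂ (monomialMatrix_mul_transvection σ (hw j) i c) r s
  rw [← inv_mul_cancel_left A (SpecialLinearGroup.transvection h c), hconj]
  exact mul_mem (inv_mem hA) (mul_mem (hij hij' _) hA)

end Monomial

open Fin.NatCast in
theorem forall_containsTransvections_of_shift {n : ℕ} [NeZero n] {R : Type*} [CommRing R]
    {G : Subgroup (Matrix.SpecialLinearGroup (Fin n) R)} (h10 : ContainsTransvections G 1 0)
    (hshift : ∀ i j, ContainsTransvections G i j → ContainsTransvections G (i + 1) (j + 1)) :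
    ∀ i j, ContainsTransvections G i j := by
  have hsucc (m : ℕ) : ContainsTransvections G ((m : Fin n) + 1) m := by
    induction m with
    | zero => simpa using h10
    | succ m ih => simpa using hshift _ _ ih
  have hdist (j : Fin n) (d : ℕ) : ContainsTransvections G (j + d) j := by
    induction d with
    | zero => exact fun h => (h (add_zero j)).elim
    | succ d ih =>
      have hstep := hsucc (j + d).val
      rw [Fin.cast_val_eq_self] at hstep
      simpa [← add_assoc] using hstep.trans ih
  intro i j
  simpa using hdist j (i - j).val

theorem Fin.val_add_one_eq_ite {n : ℕ} [NeZero n] (r : Fin n) :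
    (r + 1).val = if r.val + 1 = n then 0 else r.val + 1 := by
  rw [Fin.val_add, Fin.val_one', Nat.add_mod_mod]
  split_ifs with h
  · simp [h]
  · exact Nat.mod_eq_of_lt (by omega)

def aSign (n : ℕ) (r : Fin n) : ℤ := if r.val + 1 = n then eps n else 1

theorem aSign_mul_self (n : ℕ) (r : Fin n) : aSign n r * aSign n r = 1 := by
  unfold aSign
  split_ifs
  · rw [eps, ← pow_add, ← two_mul, pow_mul]
    simp
  · rfl

theorem aMat_eq_monomialMatrix (n : ℕ) [NeZero n] :
    aMat n = monomialMatrix (Equiv.addRight 1) (aSign n) := by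
  ext r s
  simp only [aMat, matUnit, monomialMatrix, Matrix.add_apply, Matrix.sum_apply,
    Matrix.smul_apply, of_apply, Equiv.coe_addRight]
  simp only [add_left_inj, show ∀ x : ℕ, x + 2 = x + 1 + 1 from fun _ => rfl, ite_and,
    Finset.sum_ite_eq, Finset.mem_range, aSign, Fin.ext_iff, Fin.val_add_one_eq_ite]
  have := r.isLt
  split_ifs <;> first | omega | simp

theorem bMat_eq {n : ℕ} [NeZero n] (hn : 2 ≤ n) : bMat n = transvection (1 : Fin n) 0 1 := by
  have h1 : (1 : Fin n).val = 1 := by rw [Fin.val_one']; exact Nat.mod_eq_of_lt hn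
  ext r s
  simp only [bMat, matUnit, transvection, Matrix.add_apply, of_apply, single_apply, Fin.ext_iff,
    h1, Fin.val_zero]
  grind

/-- For every `n ≥ 3`, the pair `(a_n, b_n)` generates `SL_n(ℤ)`; in
particular, every elementary transvection `T_{i,j}` (`i ≠ j`) lies in the subgroup
generated by `a_n` and `b_n`. -/
theorem aMat_bMat_generate (n : ℕ) (hn : 3 ≤ n)
    (A B : Matrix.SpecialLinearGroup (Fin n) ℤ)
    (hA : (A : Matrix (Fin n) (Fin n) ℤ) = aMat n)
    (hB : (B : Matrix (Fin n) (Fin n) ℤ) = bMat n) :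
    Subgroup.closure ({A, B} : Set (Matrix.SpecialLinearGroup (Fin n) ℤ)) = ⊤ ∧
    (∀ i j : ℕ, 1 ≤ i → i ≤ n → 1 ≤ j → j ≤ n → i ≠ j →
      ∀ T : Matrix.SpecialLinearGroup (Fin n) ℤ,
        (T : Matrix (Fin n) (Fin n) ℤ) = Tmat n i j →
        T ∈ Subgroup.closure ({A, B} : Set (Matrix.SpecialLinearGroup (Fin n) ℤ))) := by
  have : NeZero n := ⟨by omega⟩
  set G := Subgroup.closure ({A, B} : Set (Matrix.SpecialLinearGroup (Fin n) ℤ))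
  have hAG : A ∈ G := Subgroup.subset_closure (Set.mem_insert A {B})
  have hBG : B ∈ G := Subgroup.subset_closure (Set.mem_insert_of_mem A rfl)
  have h10 : ContainsTransvections G 1 0 := fun h => by
    have hBT : B = SpecialLinearGroup.transvection h 1 :=
      Subtype.ext (hB.trans (bMat_eq (by omega)))
    exact transvection_mem_of_one_mem h (hBT ▸ hBG)
  have hshift (i j : Fin n) (hij : ContainsTransvections G i j) :
      ContainsTransvections G (i + 1) (j + 1) :=
    hij.map_monomialMatrix hAG (hA.trans (aMat_eq_monomialMatrix n)) (aSign_mul_self n)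
  have htop : G = ⊤ :=
    eq_top_of_containsTransvections (forall_containsTransvections_of_shift h10 hshift)
  exact ⟨htop, fun _ _ _ _ _ _ _ T _ => htop ▸ Subgroup.mem_top T⟩
end
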